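/- arXiv:2603.10632 — 4 statements merged into one kernel-verified Lean document; each statement's English description precedes it below -/
import Mathlib

section
/- For every f ∈ [0, 1], the Eddington factor χ(f) = (3 + 4f²)/(5 + 2√(4 − 3f²)) satisfies 1/3 ≤ χ(f), f² ≤ χ(f), and χ(f) ≤ 1. -/
/-- The Eddington factor `χ(f) = (3 + 4f²)/(5 + 2√(4 − 3f²))` of the M₁ closure. -/
noncomputable def eddingtonFactor (f : ℝ) : ℝ :=
  (3 + 4 * f ^ 2) / (5 + 2 * Real.sqrt (4 - 3 * f ^ 2))

/-- For every `f ∈ [0,1]`, the Eddington factor satisfies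
`1/3 ≤ χ(f)`, `f² ≤ χ(f)` and `χ(f) ≤ 1`. -/
theorem eddingtonFactor_bounds :
    ∀ f ∈ Set.Icc (0 : ℝ) 1,
      1 / 3 ≤ eddingtonFactor f ∧ f ^ 2 ≤ eddingtonFactor f ∧ eddingtonFactor f ≤ 1 := by
  rintro f ⟨h0, h1⟩
  set s := Real.sqrt (4 - 3 * f ^ 2) with hs
  have hf2 : f ^ 2 ≤ 1 := by nlinarith
  have hs0 : 0 ≤ s := Real.sqrt_nonneg _
  have hs2 : s ^ 2 = 4 - 3 * f ^ 2 := Real.sq_sqrt (by nlinarith)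
  have hsle : s ≤ 2 := by nlinarith
  have hden : 0 < 5 + 2 * s := by linarith
  unfold eddingtonFactor
  rw [← hs]
  refine ⟨le_div_iff₀ hden |>.2 (by nlinarith), le_div_iff₀ hden |>.2 ?_,
    div_le_one hden |>.2 (by nlinarith)⟩
  have key : 2 * f ^ 2 * s ≤ 3 - f ^ 2 := by
    nlinarith [mul_nonneg (sq_nonneg (f ^ 2 - 1)) (show (0:ℝ) ≤ 4 * f ^ 2 + 3 by positivity),
      mul_nonneg (mul_nonneg hs0 (sq_nonneg f)) hs0, sq_nonneg (2 * f ^ 2 * s - (3 - f ^ 2)),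
      mul_nonneg hs0 (sq_nonneg f)]
  nlinarith
end

section
/- Let d ≥ 1 and let v ∈ ℝ^d with 0 < ‖v‖ ≤ 1. Then the Eddington tensor D(v) is positive semidefinite: for every w ∈ ℝ^d, ⟨w, D(v)w⟩ ≥ 0. -/
/-- The Eddington tensor
`D(v) = ((1 − χ(‖v‖))/2) I_d + ((3χ(‖v‖) − 1)/2) (v ⊗ v)/‖v‖²`
as a `d × d` real matrix, for `v ∈ ℝ^d = EuclideanSpace ℝ (Fin d)`. -/
noncomputable def eddingtonTensor (d : ℕ) (v : EuclideanSpace ℝ (Fin d)) :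
    Matrix (Fin d) (Fin d) ℝ :=
  ((1 - eddingtonFactor ‖v‖) / 2) • (1 : Matrix (Fin d) (Fin d) ℝ) +
    ((3 * eddingtonFactor ‖v‖ - 1) / 2 / ‖v‖ ^ 2) • Matrix.of (fun i j => v i * v j)

/-!
`D(v)` is `a • 1 + b • v vᵀ` with `a = (1 - χ)/2` and `b = (3χ - 1)/(2‖v‖²)`, and both coefficients
are nonnegative because `1/3 ≤ χ(f) ≤ 1` for `|f| ≤ 1`: the bounds come from `1 ≤ √(4 - 3f²) ≤ 2`.
-/

open Matrix

theorem Matrix.posSemidef_smul_one_add_smul_vecMulVec_self {n : Type*} [Fintype n]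
    [DecidableEq n] {a b : ℝ} (ha : 0 ≤ a) (hb : 0 ≤ b) (x : n → ℝ) :
    (a • (1 : Matrix n n ℝ) + b • vecMulVec x x).PosSemidef :=
  (PosSemidef.one.smul ha).add ((posSemidef_vecMulVec_self_star x).smul hb)

theorem one_third_le_eddingtonFactor (f : ℝ) : 1 / 3 ≤ eddingtonFactor f := by
  have hs : √(4 - 3 * f ^ 2) ≤ 2 :=
    Real.sqrt_le_iff.mpr ⟨by norm_num, by nlinarith [sq_nonneg f]⟩
  rw [eddingtonFactor, div_le_div_iff₀ (by norm_num) (by positivity)]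
  nlinarith [sq_nonneg f]

theorem eddingtonFactor_le_one {f : ℝ} (hf : |f| ≤ 1) : eddingtonFactor f ≤ 1 := by
  have hf2 : f ^ 2 ≤ 1 := (sq_le_one_iff_abs_le_one f).mpr hf
  have hs : 1 ≤ √(4 - 3 * f ^ 2) := Real.le_sqrt_of_sq_le (by linarith)
  rw [eddingtonFactor, div_le_one (by positivity)]
  linarith

theorem posSemidef_eddingtonTensor {d : ℕ} {v : EuclideanSpace ℝ (Fin d)} (hv : ‖v‖ ≤ 1) :
    (eddingtonTensor d v).PosSemidef := by
  have hχ₀ := one_third_le_eddingtonFactor ‖v‖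
  have hχ₁ : eddingtonFactor ‖v‖ ≤ 1 := eddingtonFactor_le_one (by rwa [abs_norm])
  exact posSemidef_smul_one_add_smul_vecMulVec_self (by linarith)
    (div_nonneg (by linarith) (sq_nonneg _)) v

theorem eddingtonTensor_posSemidef_general (d : ℕ)
    (v : EuclideanSpace ℝ (Fin d)) (hv1 : ‖v‖ ≤ 1) :
    ∀ w : EuclideanSpace ℝ (Fin d),
      0 ≤ inner (𝕜 := ℝ) w (WithLp.toLp 2 ((eddingtonTensor d v).mulVec w) : EuclideanSpace ℝ (Fin d)) := by
  intro w
  rw [EuclideanSpace.inner_eq_star_dotProduct, dotProduct_comm]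
  simpa using (posSemidef_eddingtonTensor hv1).dotProduct_mulVec_nonneg w

/-- For `0 < ‖v‖ ≤ 1`, the Eddington tensor `D(v)` is positive semidefinite:
`⟨w, D(v)w⟩ ≥ 0` for every `w ∈ ℝ^d`. -/
theorem eddingtonTensor_posSemidef (d : ℕ) (hd : 1 ≤ d)
    (v : EuclideanSpace ℝ (Fin d)) (hv0 : 0 < ‖v‖) (hv1 : ‖v‖ ≤ 1) :
    ∀ w : EuclideanSpace ℝ (Fin d),
      0 ≤ inner (𝕜 := ℝ) w (WithLp.toLp 2 ((eddingtonTensor d v).mulVec w) : EuclideanSpace ℝ (Fin d)) :=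
  eddingtonTensor_posSemidef_general d v hv1
end

section
/- Let d ≥ 1 and let u_i = (ρ_i, m_i) and u_j = (ρ_j, m_j) be states in the realizable set R₁ with m_i ≠ 0 and m_j ≠ 0. Let c ∈ ℝ^d with c ≠ 0 and let d_v ∈ ℝ with d_v ≥ ‖c‖. Then the Lax–Friedrichs bar state ū_{ij} = (u_i + u_j)/2 − (f(u_j)·c − f(u_i)·c)/(2 d_v) belongs to R₁, where f(u)·c = (⟨m, c⟩, ρ · D(m/ρ) c) ∈ ℝ × ℝ^d is the M₁ flux of the state u = (ρ, m) contracted with c. -/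
/-- The realizable set `R₁ = {(ψ⁰, ψ¹) ∈ ℝ × ℝ^d : ψ⁰ > 0, ‖ψ¹‖ < ψ⁰}` of the M₁ model. -/
def realizableSet (d : ℕ) : Set (ℝ × EuclideanSpace ℝ (Fin d)) :=
  {u | 0 < u.1 ∧ ‖u.2‖ < u.1}

/-- The M₁ flux of a state `u = (ρ, m)` contracted with `c`:
`f(u)·c = (⟨m, c⟩, ρ D(m/ρ) c) ∈ ℝ × ℝ^d`, using the closure `ψ² = D(ψ¹/ψ⁰)ψ⁰`. -/
noncomputable def m1FluxDotC (d : ℕ) (u : ℝ × EuclideanSpace ℝ (Fin d))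
    (c : EuclideanSpace ℝ (Fin d)) : ℝ × EuclideanSpace ℝ (Fin d) :=
  (inner (𝕜 := ℝ) u.2 c,
    u.1 • (WithLp.toLp 2 ((eddingtonTensor d (u.1⁻¹ • u.2)).mulVec c) : EuclideanSpace ℝ (Fin d)))

/-!
The bar state is the midpoint of `uᵢ + f(uᵢ)·(c / d_v)` and `uⱼ + f(uⱼ)·(-c / d_v)`, and `R₁` is
convex, so it suffices that `u + f(u)·w ∈ R₁` whenever `u ∈ R₁` and `‖w‖ ≤ 1`. Factoring out `ρ`,
this is `‖v + D(v) w‖ < 1 + ⟨v, w⟩` for `v = m / ρ`, `‖v‖ < 1`. Splitting `w` into its components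
along and orthogonal to `v` turns this into a scalar inequality in `f = ‖v‖`, `a = ⟨v, w⟩ / ‖v‖`
and `t = ‖w‖`; with `r = √(4 - 3f²)` one has `χ(f) = (5 - 2r) / 3`, and `9 (2 - r)` times the gap
is `6 (r - 1) ((2 - r) a + f)² + (2 - r) (r - 1)² (1 - t²) > 0`.
-/

open scoped RealInnerProductSpace Matrix

lemma eddingtonFactor_eq {f : ℝ} (hf : 3 * f ^ 2 ≤ 4) :
    eddingtonFactor f = (5 - 2 * √(4 - 3 * f ^ 2)) / 3 := by
  have hr : √(4 - 3 * f ^ 2) ^ 2 = 4 - 3 * f ^ 2 := Real.sq_sqrt (by linarith)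
  rw [eddingtonFactor, div_eq_div_iff (by positivity) (by norm_num)]
  linear_combination 4 * hr

lemma eddingtonFactor_zero : eddingtonFactor 0 = 1 / 3 := by
  rw [eddingtonFactor_eq (by norm_num)]
  norm_num [show (4 : ℝ) = 2 ^ 2 by norm_num]

lemma eddington_quadratic_lt {f a t : ℝ} (hf0 : 0 < f) (hf1 : f < 1) (ha : |a| ≤ t)
    (ht : t ≤ 1) :
    (f + eddingtonFactor f * a) ^ 2 + ((1 - eddingtonFactor f) / 2) ^ 2 * (t ^ 2 - a ^ 2) <
      (1 + f * a) ^ 2 := by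
  rw [eddingtonFactor_eq (by nlinarith)]
  set r := √(4 - 3 * f ^ 2)
  have hr : r ^ 2 = 4 - 3 * f ^ 2 := Real.sq_sqrt (by nlinarith)
  have hr1 : 1 < r := by nlinarith [Real.sqrt_nonneg (4 - 3 * f ^ 2)]
  have hr2 : r < 2 := by nlinarith
  obtain ⟨ha₁, ha₂⟩ := abs_le.mp ha
  have hlead : 0 < (2 - r) * a + f := by nlinarith
  have hgap : (2 - r) * 9 * ((1 + f * a) ^ 2 - ((f + (5 - 2 * r) / 3 * a) ^ 2 +
        ((1 - (5 - 2 * r) / 3) / 2) ^ 2 * (t ^ 2 - a ^ 2))) =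
      6 * (r - 1) * ((2 - r) * a + f) ^ 2 + (2 - r) * (r - 1) ^ 2 * (1 - t ^ 2) := by
    linear_combination (r - 4 + 6 * a ^ 2 - 3 * a ^ 2 * r) * hr
  have hgap_pos : 0 < (2 - r) * 9 * ((1 + f * a) ^ 2 - ((f + (5 - 2 * r) / 3 * a) ^ 2 +
      ((1 - (5 - 2 * r) / 3) / 2) ^ 2 * (t ^ 2 - a ^ 2))) := by
    rw [hgap]
    have ht2 : t ^ 2 ≤ 1 := by nlinarith
    exact add_pos_of_pos_of_nonneg (by have := pow_pos hlead 2; nlinarith)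
      (mul_nonneg (mul_nonneg (by linarith) (sq_nonneg _)) (by linarith))
  linarith [pos_of_mul_pos_right hgap_pos (by linarith)]

variable {d : ℕ}

lemma eddingtonTensor_mulVec (v w : EuclideanSpace ℝ (Fin d)) :
    WithLp.toLp 2 (eddingtonTensor d v *ᵥ w) =
      ((1 - eddingtonFactor ‖v‖) / 2) • w +
        ((3 * eddingtonFactor ‖v‖ - 1) / 2 / ‖v‖ ^ 2 * ⟪v, w⟫) • v := by
  ext i
  simp only [eddingtonTensor, Matrix.mulVec, dotProduct, Matrix.add_apply,
    Matrix.smul_apply, Matrix.of_apply, Matrix.one_apply, smul_eq_mul, PiLp.inner_apply,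
    RCLike.inner_apply, starRingEnd_apply, star_trivial, PiLp.add_apply, PiLp.smul_apply,
    mul_ite, ite_mul, mul_one, mul_zero, zero_mul, add_mul, Finset.sum_add_distrib,
    Finset.sum_ite_eq, Finset.mem_univ, if_true, Finset.mul_sum, Finset.sum_mul]
  congr 1
  exact Finset.sum_congr rfl fun _ _ => by ring

lemma norm_add_eddingtonTensor_mulVec_lt {v w : EuclideanSpace ℝ (Fin d)} (hv : ‖v‖ < 1)
    (hw : ‖w‖ ≤ 1) :
    ‖v + WithLp.toLp 2 (eddingtonTensor d v *ᵥ w)‖ < 1 + ⟪v, w⟫ := by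
  rw [eddingtonTensor_mulVec]
  rcases eq_or_ne v 0 with rfl | hv0
  -- the junk value `x / 0 = 0` gives `D(0) = I / 3`
  · simp only [norm_zero, eddingtonFactor_zero, inner_zero_left, smul_zero, add_zero, zero_add,
      norm_smul]
    norm_num
    linarith
  have hf : 0 < ‖v‖ := norm_pos_iff.mpr hv0
  set χ := eddingtonFactor ‖v‖
  set a := ⟪v, w⟫ / ‖v‖ with ha_def
  have hinner : ⟪v, w⟫ = ‖v‖ * a := by rw [ha_def]; field_simp
  have ha : |a| ≤ ‖w‖ := by
    rw [ha_def, abs_div, abs_of_pos hf, div_le_iff₀ hf, mul_comm]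
    exact abs_real_inner_le_norm v w
  have hsq : ‖v + (((1 - χ) / 2) • w + ((3 * χ - 1) / 2 / ‖v‖ ^ 2 * ⟪v, w⟫) • v)‖ ^ 2 =
      (‖v‖ + χ * a) ^ 2 + ((1 - χ) / 2) ^ 2 * (‖w‖ ^ 2 - a ^ 2) := by
    rw [show v + (((1 - χ) / 2) • w + ((3 * χ - 1) / 2 / ‖v‖ ^ 2 * ⟪v, w⟫) • v) =
        (1 + (3 * χ - 1) / 2 / ‖v‖ ^ 2 * ⟪v, w⟫) • v + ((1 - χ) / 2) • w by module,
      norm_add_sq_real, norm_smul, norm_smul, real_inner_smul_left, real_inner_smul_right,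
      Real.norm_eq_abs, Real.norm_eq_abs, mul_pow, mul_pow, sq_abs, sq_abs, hinner]
    field_simp
    ring
  have hpos : 0 ≤ 1 + ⟪v, w⟫ := by
    have := neg_abs_le a
    rw [hinner]; nlinarith
  refine lt_of_pow_lt_pow_left₀ 2 hpos ?_
  rw [hsq, hinner]
  exact eddington_quadratic_lt hf hv ha hw

lemma mem_realizableSet_iff {u : ℝ × EuclideanSpace ℝ (Fin d)} :
    u ∈ realizableSet d ↔ ‖u.2‖ < u.1 :=
  ⟨And.right, fun h => ⟨(norm_nonneg _).trans_lt h, h⟩⟩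

lemma convex_realizableSet : Convex ℝ (realizableSet d) := by
  refine convex_iff_forall_pos.mpr fun x hx y hy a b ha hb hab => ?_
  rw [mem_realizableSet_iff] at hx hy ⊢
  calc ‖(a • x + b • y).2‖ ≤ a * ‖x.2‖ + b * ‖y.2‖ := by
        simpa [norm_smul, abs_of_pos ha, abs_of_pos hb] using norm_add_le (a • x.2) (b • y.2)
    _ < a * x.1 + b * y.1 := by gcongr
    _ = (a • x + b • y).1 := by simp

lemma smul_mem_realizableSet {ρ : ℝ} (hρ : 0 < ρ) {u : ℝ × EuclideanSpace ℝ (Fin d)}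
    (hu : u ∈ realizableSet d) : ρ • u ∈ realizableSet d := by
  rw [mem_realizableSet_iff] at hu ⊢
  simpa [norm_smul, abs_of_pos hρ] using mul_lt_mul_of_pos_left hu hρ

lemma m1FluxDotC_smul (u : ℝ × EuclideanSpace ℝ (Fin d)) (k : ℝ) (c : EuclideanSpace ℝ (Fin d)) :
    m1FluxDotC d u (k • c) = k • m1FluxDotC d u c := by
  ext i
  · simp [m1FluxDotC, real_inner_smul_right]
  · simp [m1FluxDotC, Matrix.mulVec_smul, smul_comm k]

lemma add_m1FluxDotC_mem_realizableSet {u : ℝ × EuclideanSpace ℝ (Fin d)}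
    (hu : u ∈ realizableSet d) {w : EuclideanSpace ℝ (Fin d)} (hw : ‖w‖ ≤ 1) :
    u + m1FluxDotC d u w ∈ realizableSet d := by
  obtain ⟨hρ, hm⟩ := hu
  set v := u.1⁻¹ • u.2
  have hv : ‖v‖ < 1 := by
    rw [norm_smul, norm_inv, Real.norm_of_nonneg hρ.le, inv_mul_lt_one₀ hρ]
    exact hm
  have hscale : u + m1FluxDotC d u w =
      u.1 • ((1 + ⟪v, w⟫, v + WithLp.toLp 2 (eddingtonTensor d v *ᵥ w)) :
        ℝ × EuclideanSpace ℝ (Fin d)) := by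
    ext
    · simp [m1FluxDotC, v, real_inner_smul_left, hρ.ne', mul_add]
    · simp [m1FluxDotC, v, smul_smul, hρ.ne', smul_add]
  rw [hscale]
  exact smul_mem_realizableSet hρ
    (mem_realizableSet_iff.mpr (norm_add_eddingtonTensor_mulVec_lt hv hw))

theorem barState_realizable_general (d : ℕ)
    (ui uj : ℝ × EuclideanSpace ℝ (Fin d))
    (hui : ui ∈ realizableSet d) (huj : uj ∈ realizableSet d)
    (c : EuclideanSpace ℝ (Fin d))
    (dv : ℝ) (hdv : ‖c‖ ≤ dv) :
    (2 : ℝ)⁻¹ • (ui + uj) - (2 * dv)⁻¹ • (m1FluxDotC d uj c - m1FluxDotC d ui c) ∈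
      realizableSet d := by
  have hw : ‖dv⁻¹ • c‖ ≤ 1 := by
    rcases (norm_nonneg c).trans hdv |>.eq_or_lt with rfl | hdv0
    · simp
    · rw [norm_smul, norm_inv, Real.norm_of_nonneg hdv0.le, inv_mul_le_one₀ hdv0]
      exact hdv
  have hw' : ‖(-dv⁻¹) • c‖ ≤ 1 := by rwa [neg_smul, norm_neg]
  have hmid : (2 : ℝ)⁻¹ • (ui + uj) - (2 * dv)⁻¹ • (m1FluxDotC d uj c - m1FluxDotC d ui c) =
      (2 : ℝ)⁻¹ • (ui + m1FluxDotC d ui (dv⁻¹ • c)) +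
        (2 : ℝ)⁻¹ • (uj + m1FluxDotC d uj ((-dv⁻¹) • c)) := by
    rw [m1FluxDotC_smul, m1FluxDotC_smul, mul_inv]
    module
  rw [hmid]
  exact convex_realizableSet (add_m1FluxDotC_mem_realizableSet hui hw)
    (add_m1FluxDotC_mem_realizableSet huj hw') (by norm_num) (by norm_num) (by norm_num)

/-- The Lax–Friedrichs bar state
`ū_{ij} = (u_i + u_j)/2 − (f(u_j)·c − f(u_i)·c)/(2 d_v)` of two realizable states
`u_i, u_j ∈ R₁` (with nonvanishing first moments) is realizable whenever `d_v ≥ ‖c‖ > 0`. -/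
theorem barState_realizable (d : ℕ) (hd : 1 ≤ d)
    (ui uj : ℝ × EuclideanSpace ℝ (Fin d))
    (hui : ui ∈ realizableSet d) (huj : uj ∈ realizableSet d)
    (hmi : ui.2 ≠ 0) (hmj : uj.2 ≠ 0)
    (c : EuclideanSpace ℝ (Fin d)) (hc : c ≠ 0)
    (dv : ℝ) (hdv : ‖c‖ ≤ dv) :
    (2 : ℝ)⁻¹ • (ui + uj) - (2 * dv)⁻¹ • (m1FluxDotC d uj c - m1FluxDotC d ui c) ∈
      realizableSet d :=
  barState_realizable_general d ui uj hui huj c dv hdv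
end

section
/- Let A_{ij}, B_{ij}, A_{ji}, B_{ji} ∈ ℝ, define P_{ij}(α) = A_{ij} α² + B_{ij} α, R_{ij} = max{0, A_{ij}} + B_{ij}, and similarly P_{ji}, R_{ji}. Let Q̃_{ij} > 0 and Q̃_{ji} > 0, and define α^{IDP} = min{Q̃_{ij}/R_{ij}, Q̃_{ji}/R_{ji}} if R_{ij} > Q̃_{ij} and R_{ji} > Q̃_{ji}; α^{IDP} = Q̃_{ij}/R_{ij} if R_{ij} > Q̃_{ij} and R_{ji} ≤ Q̃_{ji}; α^{IDP} = Q̃_{ji}/R_{ji} if R_{ij} ≤ Q̃_{ij} and R_{ji} > Q̃_{ji}; and α^{IDP} = 1 otherwise. Then α^{IDP} ∈ (0, 1], and P_{ij}(α^{IDP}) ≤ Q̃_{ij} and P_{ji}(α^{IDP}) ≤ Q̃_{ji}. In particular, if Q̃_{ij} < Q_{ij} and Q̃_{ji} < Q_{ji}, then P_{ij}(α^{IDP}) < Q_{ij} and P_{ji}(α^{IDP}) < Q_{ji}. -/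
private lemma idp_key (A B Qt α : ℝ) (h0 : 0 < α) (h1 : α ≤ 1)
    (hR : α * (max 0 A + B) ≤ Qt) : A * α ^ 2 + B * α ≤ Qt := by
  have hA : A * α ^ 2 ≤ max 0 A * α := by
    rcases le_or_gt A 0 with h | h
    · have : A * α ^ 2 ≤ 0 := mul_nonpos_of_nonpos_of_nonneg h (by positivity)
      calc A * α ^ 2 ≤ 0 := this
        _ ≤ max 0 A * α := mul_nonneg (le_max_left _ _) h0.le
    · have hmax : max 0 A = A := max_eq_right h.le
      rw [hmax]
      nlinarith [mul_nonneg (mul_nonneg h.le h0.le) (sub_nonneg.2 h1)]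
  nlinarith

private lemma idp_bound (A B Qt α : ℝ) (h0 : 0 < α) (h1 : α ≤ 1) (hQt : 0 < Qt)
    (hcase : (Qt < max 0 A + B → α ≤ Qt / (max 0 A + B)) ) :
    A * α ^ 2 + B * α ≤ Qt := by
  apply idp_key A B Qt α h0 h1
  set R := max 0 A + B with hR
  rcases lt_or_ge Qt R with h | h
  · have hRpos : 0 < R := lt_trans hQt h
    have := hcase h
    calc α * R ≤ (Qt / R) * R := by nlinarith
      _ = Qt := div_mul_cancel₀ _ hRpos.ne'
  · rcases le_or_gt R 0 with hr | hr
    · nlinarith [mul_nonpos_of_nonneg_of_nonpos h0.le hr]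
    · nlinarith

/-- The IDP correction factor `α^{IDP}` defined by the case distinction of the MCL scheme
lies in `(0, 1]` and enforces `P_{ij}(α^{IDP}) ≤ Q̃_{ij}` and `P_{ji}(α^{IDP}) ≤ Q̃_{ji}`;
in particular, `P_{ij}(α^{IDP}) < Q_{ij}` and `P_{ji}(α^{IDP}) < Q_{ji}` whenever
`Q̃_{ij} < Q_{ij}` and `Q̃_{ji} < Q_{ji}`. -/
theorem idp_correction_factor
    (Aij Bij Aji Bji Qtij Qtji Qij Qji : ℝ)
    (hQtij : 0 < Qtij) (hQtji : 0 < Qtji) :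
    let Pij : ℝ → ℝ := fun a => Aij * a ^ 2 + Bij * a
    let Pji : ℝ → ℝ := fun a => Aji * a ^ 2 + Bji * a
    let Rij : ℝ := max 0 Aij + Bij
    let Rji : ℝ := max 0 Aji + Bji
    let αIDP : ℝ :=
      if Qtij < Rij then
        (if Qtji < Rji then min (Qtij / Rij) (Qtji / Rji) else Qtij / Rij)
      else
        (if Qtji < Rji then Qtji / Rji else 1)
    (0 < αIDP ∧ αIDP ≤ 1) ∧
      Pij αIDP ≤ Qtij ∧ Pji αIDP ≤ Qtji ∧
      (Qtij < Qij → Qtji < Qji → Pij αIDP < Qij ∧ Pji αIDP < Qji) := by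
  intro Pij Pji Rij Rji αIDP
  have hdivij : Qtij < Rij → 0 < Qtij / Rij ∧ Qtij / Rij ≤ 1 := fun h => by
    have hR : 0 < Rij := lt_trans hQtij h
    exact ⟨div_pos hQtij hR, (div_le_one hR).2 h.le⟩
  have hdivji : Qtji < Rji → 0 < Qtji / Rji ∧ Qtji / Rji ≤ 1 := fun h => by
    have hR : 0 < Rji := lt_trans hQtji h
    exact ⟨div_pos hQtji hR, (div_le_one hR).2 h.le⟩
  have hmem : 0 < αIDP ∧ αIDP ≤ 1 := by
    unfold αIDP
    split_ifs with h1 h2 h2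
    · exact ⟨lt_min (hdivij h1).1 (hdivji h2).1,
        le_trans (min_le_left _ _) (hdivij h1).2⟩
    · exact hdivij h1
    · exact hdivji h2
    · exact ⟨one_pos, le_refl 1⟩
  have hcaseij : Qtij < Rij → αIDP ≤ Qtij / Rij := by
    intro h
    unfold αIDP
    rw [if_pos h]
    split_ifs with h2
    · exact min_le_left _ _
    · exact le_refl _
  have hcaseji : Qtji < Rji → αIDP ≤ Qtji / Rji := by
    intro h
    unfold αIDP
    by_cases h1 : Qtij < Rij
    · rw [if_pos h1, if_pos h]; exact min_le_right _ _
    · rw [if_neg h1, if_pos h]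
  have hPij : Pij αIDP ≤ Qtij :=
    idp_bound Aij Bij Qtij αIDP hmem.1 hmem.2 hQtij hcaseij
  have hPji : Pji αIDP ≤ Qtji :=
    idp_bound Aji Bji Qtji αIDP hmem.1 hmem.2 hQtji hcaseji
  exact ⟨hmem, hPij, hPji, fun hij hji =>
    ⟨lt_of_le_of_lt hPij hij, lt_of_le_of_lt hPji hji⟩⟩
end
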